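/- arXiv:0903.3685 — 6 statements merged into one kernel-verified Lean document; each statement's English description precedes it below -/
import Mathlib

section
/- In the triangular lattice Δ there exists a proper perfect dominating set, and any two proper perfect dominating sets of Δ are equivalent up to symmetry: for any proper perfect dominating sets S and S' of Δ there is a graph automorphism φ of Δ with φ(S) = S'. (Up to symmetry, Δ has exactly one proper perfect dominating set.) -/
open SimpleGraph Set

def triDirs : Set (ℤ × ℤ) := {(1,0), (-1,0), (0,1), (0,-1), (1,-1), (-1,1)}

def triLattice : SimpleGraph (ℤ × ℤ) :=
  SimpleGraph.fromRel (fun u v => u - v ∈ triDirs)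

def torLattice (m n : ℕ) : SimpleGraph (ZMod m × ZMod n) :=
  SimpleGraph.fromRel (fun u v =>
    ∃ d ∈ triDirs, u - v = ((d.1 : ZMod m), (d.2 : ZMod n)))

def IsPDS {V : Type*} (G : SimpleGraph V) (S : Set V) : Prop :=
  ∀ v ∉ S, ∃! u, u ∈ S ∧ G.Adj v u

def IsSPDS {V : Type*} (G : SimpleGraph V) (S : Set V) : Prop :=
  ∀ v ∉ S, {u | u ∈ S ∧ G.Adj v u}.ncard = 2

def IsQPDS {V : Type*} (G : SimpleGraph V) (S : Set V) : Prop :=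
  ∀ v ∉ S, {u | u ∈ S ∧ G.Adj v u}.ncard = 1 ∨ {u | u ∈ S ∧ G.Adj v u}.ncard = 2

def IsK2QPDS {V : Type*} (G : SimpleGraph V) (S : Set V) : Prop :=
  IsQPDS G S ∧ ∀ v ∈ S, {u | u ∈ S ∧ G.Adj v u}.ncard = 1

def IsK3QPDS {V : Type*} (G : SimpleGraph V) (S : Set V) : Prop :=
  IsQPDS G S ∧ ∀ v ∈ S, ∃ a b, a ≠ b ∧ G.Adj a b ∧ {u | u ∈ S ∧ G.Adj v u} = {a, b}

def IsIndep {V : Type*} (G : SimpleGraph V) (S : Set V) : Prop :=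
  ∀ a ∈ S, ∀ b ∈ S, ¬ G.Adj a b

/-!
A proper perfect dominating set `S` of the triangular lattice is independent: if `s` and `s + d`
both lie in `S`, the common neighbour `s + rot d` (with `rot` the rotation by 60°) must lie in `S`
too, since otherwise it would have two neighbours in `S`; repeating this fills the lattice.
An independent perfect dominating set is a perfect code, so two of its points are at hexagonal
distance at least 3. A local analysis around `s ∈ S` then shows that `s + (2, 1)` or its mirror
image `s + (3, -1)` lies in `S`, and that `s, s + (2, 1) ∈ S` forces `s + (-1, 3) ∈ S`. Since
`(-1, 3)` is the rotation of `(2, 1)`, symmetry gives the same for all six rotations of `(2, 1)`,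
and these propagate `s` along the whole lattice `s + ℤ(2, 1) + ℤ(-1, 3) = s + {p | 7 ∣ 3p₁ + p₂}`.
That lattice is itself a perfect code, so it is all of `S`.
-/

section RotationClosure

theorem add_iterate_mem {G : Type*} [Add G] {f : G → G} {W S : Set G} (hW : MapsTo f W W)
    (hS : ∀ s ∈ S, ∀ w ∈ W, s + w ∈ S → s + f w ∈ S)
    {s w : G} (hs : s ∈ S) (hw : w ∈ W) (hsw : s + w ∈ S) (k : ℕ) : s + f^[k] w ∈ S := by
  induction k with
  | zero => exact hsw
  | succ k ih =>
    rw [Function.iterate_succ_apply']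
    exact hS s hs _ (hW.iterate k hw) ih

variable {G F : Type*} [AddCommGroup G]

theorem add_zsmul_mem_of_forall {T : Set G} {v : G} (hT : ∀ t ∈ T, t + v ∈ T ∧ t - v ∈ T)
    {t : G} (ht : t ∈ T) (n : ℤ) : t + n • v ∈ T := by
  induction n with
  | zero => simpa using ht
  | succ n ih => rw [add_zsmul, one_zsmul, ← add_assoc]; exact (hT _ ih).1
  | pred n ih => convert (hT _ ih).2 using 1; rw [sub_zsmul, one_zsmul]; abel

variable [FunLike F G G] [AddMonoidHomClass F G G] {r : F} {W S : Set G}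

theorem add_zsmul_add_zsmul_mem (hr : ∀ x, r (r (r x)) = -x) (hW : MapsTo r W W)
    (hS : ∀ s ∈ S, ∀ w ∈ W, s + w ∈ S → s + r w ∈ S)
    {s w : G} (hs : s ∈ S) (hw : w ∈ W) (hsw : s + w ∈ S) (i j : ℤ) :
    s + (i • w + j • r w) ∈ S := by
  have hrot : ∀ {t v}, t ∈ S → v ∈ W → t + v ∈ S → ∀ k, t + (⇑r)^[k] v ∈ S :=
    add_iterate_mem hW hS
  have hneg : ∀ v ∈ W, -v ∈ W := fun v hv => by simpa [hr] using hW.iterate 3 hv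
  -- From `t` we step to `t + v` and turn around it starting from the chord `-v` back to `t`;
  -- as `r^[3] = -1`, the iterates reach each of `±w` and `±r w`.
  set T := {t | t ∈ S ∧ t + w ∈ S}
  have hTw : ∀ t ∈ T, t + w ∈ T ∧ t - w ∈ T := by
    rintro t ⟨ht, htw⟩
    refine ⟨⟨htw, ?_⟩, ?_, by simpa⟩
    · simpa [hr] using hrot htw (hneg w hw) (by simpa) 3
    · simpa [hr, sub_eq_add_neg] using hrot ht hw htw 3
  have hTr : ∀ t ∈ T, t + r w ∈ T ∧ t - r w ∈ T := by
    rintro t ⟨ht, htw⟩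
    have hrw : r w ∈ W := hW hw
    refine ⟨⟨by simpa using hrot ht hw htw 1, ?_⟩, ?_, ?_⟩
    · simpa [hr] using
        hrot (by simpa using hrot ht hw htw 1) (hneg _ hrw) (by simpa) 2
    · simpa [hr, sub_eq_add_neg] using hrot ht hw htw 4
    · simpa [hr, sub_eq_add_neg] using
        hrot (by simpa [hr, sub_eq_add_neg] using hrot ht hw htw 4) hrw (by simpa) 5
  simpa [add_assoc] using
    (add_zsmul_mem_of_forall hTr (add_zsmul_mem_of_forall hTw ⟨hs, hsw⟩ i) j).1

end RotationClosure

section PerfectDomination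

variable {V V' : Type*} {G : SimpleGraph V} {H : SimpleGraph V'}

theorem IsPDS.preimage (φ : G ≃g H) {S : Set V'} (hS : IsPDS H S) : IsPDS G (φ ⁻¹' S) := by
  intro v hv
  obtain ⟨u, ⟨hu, hvu⟩, huniq⟩ := hS (φ v) hv
  refine ⟨φ.symm u, ⟨by simpa using hu, φ.map_adj_iff.1 (by rwa [RelIso.apply_symm_apply])⟩,
    fun w ⟨hw, hvw⟩ => ?_⟩
  rw [← huniq (φ w) ⟨hw, φ.map_adj_iff.2 hvw⟩, RelIso.symm_apply_apply]

theorem IsIndep.preimage (φ : G →g H) {S : Set V'} (hS : IsIndep H S) : IsIndep G (φ ⁻¹' S) :=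
  fun _ ha _ hb hab => hS _ ha _ hb (φ.map_adj hab)

theorem IsPDS.nonempty [Nonempty V] {S : Set V} (hS : IsPDS G S) : S.Nonempty := by
  by_contra h
  obtain ⟨v⟩ := ‹Nonempty V›
  obtain ⟨u, ⟨hu, -⟩, -⟩ := hS v (by simp_all [not_nonempty_iff_eq_empty])
  exact h ⟨u, hu⟩

theorem IsPDS.eq_of_adj_of_adj {S : Set V} (hS : IsPDS G S) (hind : IsIndep G S) {p s t : V}
    (hs : s ∈ S) (ht : t ∈ S) (hps : G.Adj p s) (hpt : G.Adj p t) : s = t := by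
  have hp : p ∉ S := fun hp => hind p hp s hs hps
  exact (hS p hp).unique ⟨hs, hps⟩ ⟨ht, hpt⟩

end PerfectDomination

namespace TriLattice

/-- The graph distance from `0` in the triangular lattice. -/
def hexNorm (v : ℤ × ℤ) : ℕ := max v.1.natAbs (max v.2.natAbs (v.1 + v.2).natAbs)

theorem mem_triDirs_iff_hexNorm {d : ℤ × ℤ} : d ∈ triDirs ↔ hexNorm d = 1 := by
  obtain ⟨a, b⟩ := d
  simp only [triDirs, hexNorm, mem_insert_iff, mem_singleton_iff, Prod.mk.injEq]
  omega

theorem adj_iff_hexNorm {u v : ℤ × ℤ} : triLattice.Adj u v ↔ hexNorm (v - u) = 1 := by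
  simp only [triLattice, fromRel_adj, mem_triDirs_iff_hexNorm, hexNorm, ne_eq, Prod.ext_iff,
    Prod.fst_sub, Prod.snd_sub]
  omega

theorem hexNorm_neg (v : ℤ × ℤ) : hexNorm (-v) = hexNorm v := by
  simp only [hexNorm, Prod.fst_neg, Prod.snd_neg]
  omega

theorem adj_iff {u v : ℤ × ℤ} : triLattice.Adj u v ↔ v - u ∈ triDirs := by
  rw [adj_iff_hexNorm, mem_triDirs_iff_hexNorm]

theorem exists_mem_triDirs_sub_mem_triDirs {v : ℤ × ℤ} (hv : hexNorm v = 2) :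
    ∃ d ∈ triDirs, v - d ∈ triDirs := by
  obtain ⟨a, b⟩ := v
  simp only [hexNorm] at hv
  obtain ⟨ha₁, ha₂, hb₁, hb₂⟩ : -2 ≤ a ∧ a ≤ 2 ∧ -2 ≤ b ∧ b ≤ 2 := by omega
  interval_cases a <;> interval_cases b <;> simp_all [triDirs]

/-- The rotation by 60° about the origin. -/
def rot : (ℤ × ℤ) ≃+ (ℤ × ℤ) where
  toFun p := (-p.2, p.1 + p.2)
  invFun p := (p.1 + p.2, -p.1)
  left_inv p := by ext <;> simp
  right_inv p := by ext <;> simp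
  map_add' p q := by ext <;> simp <;> ring

def mirror : (ℤ × ℤ) ≃+ (ℤ × ℤ) where
  toFun p := (p.1 + p.2, -p.2)
  invFun p := (p.1 + p.2, -p.2)
  left_inv p := by ext <;> simp
  right_inv p := by ext <;> simp
  map_add' p q := by ext <;> simp <;> ring

theorem rot_apply (p : ℤ × ℤ) : rot p = (-p.2, p.1 + p.2) := rfl

theorem mirror_apply (p : ℤ × ℤ) : mirror p = (p.1 + p.2, -p.2) := rfl

theorem rot_rot_rot (p : ℤ × ℤ) : rot (rot (rot p)) = -p := by ext <;> simp [rot_apply]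

theorem mirror_mirror (p : ℤ × ℤ) : mirror (mirror p) = p := by ext <;> simp [mirror_apply]

theorem hexNorm_rot (v : ℤ × ℤ) : hexNorm (rot v) = hexNorm v := by
  simp only [hexNorm, rot_apply]
  omega

theorem hexNorm_mirror (v : ℤ × ℤ) : hexNorm (mirror v) = hexNorm v := by
  simp only [hexNorm, mirror_apply]
  omega

theorem mapsTo_rot_triDirs : MapsTo rot triDirs triDirs := fun d hd => by
  rwa [mem_triDirs_iff_hexNorm, hexNorm_rot, ← mem_triDirs_iff_hexNorm]

theorem exists_eq_zsmul_add_zsmul_rot {d : ℤ × ℤ} (hd : d ∈ triDirs) (v : ℤ × ℤ) :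
    ∃ i j : ℤ, v = i • d + j • rot d := by
  obtain ⟨a, b⟩ := d
  obtain ⟨x, y⟩ := v
  have hN : a * a + a * b + b * b = 1 := by
    simp only [triDirs, mem_insert_iff, mem_singleton_iff, Prod.mk.injEq] at hd
    rcases hd with ⟨rfl, rfl⟩ | ⟨rfl, rfl⟩ | ⟨rfl, rfl⟩ | ⟨rfl, rfl⟩ | ⟨rfl, rfl⟩ | ⟨rfl, rfl⟩ <;>
      norm_num
  -- `d` and `rot d` form a basis of `ℤ²` because their determinant is `a² + ab + b² = 1`
  refine ⟨(a + b) * x + b * y, -b * x + a * y, ?_⟩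
  ext <;> simp [rot_apply]
  · linear_combination (-x) * hN
  · linear_combination (-y) * hN

def isoOfAddEquiv (e : (ℤ × ℤ) ≃+ (ℤ × ℤ)) (he : ∀ v, hexNorm (e v) = hexNorm v) :
    triLattice ≃g triLattice where
  toEquiv := e.toEquiv
  map_rel_iff' := by simp [adj_iff_hexNorm, ← map_sub, he]

@[simp] theorem coe_isoOfAddEquiv (e : (ℤ × ℤ) ≃+ (ℤ × ℤ))
    (he : ∀ v, hexNorm (e v) = hexNorm v) : ⇑(isoOfAddEquiv e he) = e := rfl

def rotIso : triLattice ≃g triLattice := isoOfAddEquiv rot hexNorm_rot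

def mirrorIso : triLattice ≃g triLattice := isoOfAddEquiv mirror hexNorm_mirror

def translateIso (c : ℤ × ℤ) : triLattice ≃g triLattice where
  toEquiv := Equiv.addRight c
  map_rel_iff' := by simp [adj_iff]

/-- The sublattice spanned by `(2, 1)` and its rotation `(-1, 3)`. It is a perfect code because
the six directions `(a, b)` take the six nonzero values of `3 a + b` modulo 7. -/
def perfectCode : Set (ℤ × ℤ) := {p | 7 ∣ 3 * p.1 + p.2}

theorem exists_eq_zsmul_add_zsmul_of_mem_perfectCode {p : ℤ × ℤ} (hp : p ∈ perfectCode) :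
    ∃ i j : ℤ, p = i • (2, 1) + j • rot (2, 1) := by
  obtain ⟨i, hi⟩ := hp
  exact ⟨i, 2 * i - p.1, by ext <;> simp [rot_apply] <;> linarith⟩

theorem exists_add_mem_perfectCode {p : ℤ × ℤ} (hp : p ∉ perfectCode) :
    ∃ d ∈ triDirs, p + d ∈ perfectCode := by
  obtain ⟨x, y⟩ := p
  simp only [perfectCode, triDirs, mem_ofPred_eq, exists_mem_insert, mem_singleton_iff,
    exists_eq_left, Prod.mk_add_mk] at hp ⊢
  omega

theorem isPDS_perfectCode : IsPDS triLattice perfectCode := by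
  intro p hp
  obtain ⟨d, hd, hpd⟩ := exists_add_mem_perfectCode hp
  refine ⟨p + d, ⟨hpd, adj_iff.2 (by simpa)⟩, fun u ⟨hu, hpu⟩ => ?_⟩
  rw [adj_iff] at hpu
  obtain ⟨x, y⟩ := p
  obtain ⟨a, b⟩ := d
  obtain ⟨u₁, u₂⟩ := u
  simp only [perfectCode, triDirs, mem_ofPred_eq, mem_insert_iff, mem_singleton_iff,
    Prod.mk_add_mk, Prod.mk_sub_mk, Prod.mk.injEq] at hp hpd hu hpu hd ⊢
  omega

theorem perfectCode_ne_univ : perfectCode ≠ univ := fun h => by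
  have h₁₀ : ((1, 0) : ℤ × ℤ) ∈ perfectCode := h ▸ mem_univ _
  norm_num [perfectCode] at h₁₀

end TriLattice

open TriLattice

section PerfectCodes

variable {S : Set (ℤ × ℤ)}

theorem IsPDS.exists_add_mem (hS : IsPDS triLattice S) {p : ℤ × ℤ} (hp : p ∉ S) :
    ∃ d ∈ triDirs, p + d ∈ S := by
  obtain ⟨u, ⟨hu, hpu⟩, -⟩ := hS p hp
  exact ⟨u - p, adj_iff.1 hpu, by simpa using hu⟩

theorem IsPDS.add_rot_mem (hS : IsPDS triLattice S) {s d : ℤ × ℤ} (hs : s ∈ S)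
    (hd : d ∈ triDirs) (hsd : s + d ∈ S) : s + rot d ∈ S := by
  by_contra h
  rw [mem_triDirs_iff_hexNorm] at hd
  have h₁ : triLattice.Adj (s + rot d) s := by
    rw [adj_iff_hexNorm, sub_add_cancel_left, hexNorm_neg, hexNorm_rot, hd]
  have h₂ : triLattice.Adj (s + rot d) (s + d) := by
    rw [adj_iff_hexNorm, add_sub_add_left_eq_sub]
    simp only [hexNorm, rot_apply, Prod.fst_sub, Prod.snd_sub] at hd ⊢
    omega
  have hd₀ := left_eq_add.1 ((hS _ h).unique ⟨hs, h₁⟩ ⟨hsd, h₂⟩)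
  simp [hd₀, hexNorm] at hd

theorem IsPDS.eq_univ_of_adj (hS : IsPDS triLattice S) {s t : ℤ × ℤ} (hs : s ∈ S) (ht : t ∈ S)
    (hst : triLattice.Adj s t) : S = univ := by
  have hd : t - s ∈ triDirs := adj_iff.1 hst
  have hspan := add_zsmul_add_zsmul_mem rot_rot_rot mapsTo_rot_triDirs
    (fun _ hs _ hd hsd => hS.add_rot_mem hs hd hsd) hs hd (by simpa using ht)
  refine eq_univ_of_forall fun p => ?_
  obtain ⟨i, j, hij⟩ := exists_eq_zsmul_add_zsmul_rot hd (p - s)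
  rw [← sub_add_cancel p s, add_comm, hij]
  exact hspan i j

theorem IsPDS.isIndep_of_ne_univ (hS : IsPDS triLattice S) (hne : S ≠ univ) :
    IsIndep triLattice S :=
  fun _ ha _ hb hab => hne (hS.eq_univ_of_adj ha hb hab)

theorem IsPDS.eq_or_three_le_hexNorm_sub (hS : IsPDS triLattice S) (hind : IsIndep triLattice S)
    {s t : ℤ × ℤ} (hs : s ∈ S) (ht : t ∈ S) : s = t ∨ 3 ≤ hexNorm (t - s) := by
  by_contra! h
  obtain ⟨hne, hlt⟩ := h
  have hpos : hexNorm (t - s) ≠ 0 := by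
    simp only [hexNorm, Prod.fst_sub, Prod.snd_sub, ne_eq, Prod.ext_iff] at hne ⊢
    omega
  obtain hn | hn : hexNorm (t - s) = 1 ∨ hexNorm (t - s) = 2 := by omega
  · exact hind s hs t ht (adj_iff_hexNorm.2 hn)
  · obtain ⟨d, hd, hvd⟩ := exists_mem_triDirs_sub_mem_triDirs hn
    rw [mem_triDirs_iff_hexNorm] at hd hvd
    refine hne (hS.eq_of_adj_of_adj hind hs ht (p := s + d) (adj_iff_hexNorm.2 ?_)
      (adj_iff_hexNorm.2 ?_))
    · rwa [sub_add_cancel_left, hexNorm_neg]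
    · rwa [sub_add_eq_sub_sub]

theorem IsPDS.add_neg_one_three_mem (hS : IsPDS triLattice S) (hind : IsIndep triLattice S)
    {s : ℤ × ℤ} (hs : s ∈ S) (h : s + (2, 1) ∈ S) : s + (-1, 3) ∈ S := by
  have hp : s + (0, 2) ∉ S := fun hp => by
    simpa [hexNorm] using hS.eq_or_three_le_hexNorm_sub hind hs hp
  -- the `S`-neighbour of `s + (0, 2)` is far from both `s` and `s + (2, 1)` only at `s + (-1, 3)`
  obtain ⟨d, hd, hu⟩ := hS.exists_add_mem hp
  rw [add_assoc] at hu
  have hsep := And.intro (hS.eq_or_three_le_hexNorm_sub hind hs hu)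
    (hS.eq_or_three_le_hexNorm_sub hind h hu)
  simp only [triDirs, mem_insert_iff, mem_singleton_iff] at hd
  rcases hd with rfl | rfl | rfl | rfl | rfl | rfl <;> norm_num [hexNorm] at hu hsep
  exact hu

theorem IsPDS.add_two_one_mem_or_add_three_neg_one_mem (hS : IsPDS triLattice S)
    (hind : IsIndep triLattice S) {s : ℤ × ℤ} (hs : s ∈ S) :
    s + (2, 1) ∈ S ∨ s + (3, -1) ∈ S := by
  have hp : s + (2, 0) ∉ S := fun hp => by
    simpa [hexNorm] using hS.eq_or_three_le_hexNorm_sub hind hs hp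
  obtain ⟨d, hd, hu⟩ := hS.exists_add_mem hp
  rw [add_assoc] at hu
  have hsu := hS.eq_or_three_le_hexNorm_sub hind hs hu
  simp only [triDirs, mem_insert_iff, mem_singleton_iff] at hd
  rcases hd with rfl | rfl | rfl | rfl | rfl | rfl <;> norm_num [hexNorm] at hu hsu
  · -- `s + (3, 0) ∈ S` leaves no room for the `S`-neighbour of `s + (1, 1)`
    have hq : s + (1, 1) ∉ S := fun hq => by
      simpa [hexNorm] using hS.eq_or_three_le_hexNorm_sub hind hs hq
    obtain ⟨e, he, hw⟩ := hS.exists_add_mem hq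
    rw [add_assoc] at hw
    have hsep := And.intro (hS.eq_or_three_le_hexNorm_sub hind hs hw)
      (hS.eq_or_three_le_hexNorm_sub hind hu hw)
    simp only [triDirs, mem_insert_iff, mem_singleton_iff] at he
    rcases he with rfl | rfl | rfl | rfl | rfl | rfl <;> norm_num [hexNorm] at hsep
  · exact .inl hu
  · exact .inr hu

def RotatesInPerfectCodes (w : ℤ × ℤ) : Prop :=
  ∀ S : Set (ℤ × ℤ), IsPDS triLattice S → IsIndep triLattice S → ∀ s ∈ S, s + w ∈ S →
    s + rot w ∈ S

theorem RotatesInPerfectCodes.map_rot {w : ℤ × ℤ} (h : RotatesInPerfectCodes w) :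
    RotatesInPerfectCodes (rot w) := by
  intro S hS hind s hs hsw
  have := h (rotIso ⁻¹' S) (hS.preimage rotIso) (hind.preimage rotIso.toEmbedding.toHom)
    (rot.symm s) (by simpa [rotIso] using hs) (by simpa [rotIso, map_add] using hsw)
  simpa [rotIso, map_add] using this

theorem rotatesInPerfectCodes_iterate (k : ℕ) : RotatesInPerfectCodes (rot^[k] (2, 1)) := by
  induction k with
  | zero => exact fun S hS hind s hs h => hS.add_neg_one_three_mem hind hs h
  | succ k ih => rw [Function.iterate_succ_apply']; exact ih.map_rot

theorem IsPDS.image_translateIso_perfectCode (hS : IsPDS triLattice S)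
    (hind : IsIndep triLattice S) {s : ℤ × ℤ} (hs : s ∈ S) (h : s + (2, 1) ∈ S) :
    translateIso s '' perfectCode = S := by
  have hW : MapsTo rot (range fun k : ℕ => rot^[k] (2, 1)) (range fun k : ℕ => rot^[k] (2, 1)) := by
    rintro _ ⟨k, rfl⟩
    exact ⟨k + 1, Function.iterate_succ_apply' _ _ _⟩
  have hcode : ∀ p ∈ perfectCode, p + s ∈ S := fun p hp => by
    obtain ⟨i, j, rfl⟩ := exists_eq_zsmul_add_zsmul_of_mem_perfectCode hp
    rw [add_comm]
    refine add_zsmul_add_zsmul_mem rot_rot_rot hW ?_ hs ⟨0, rfl⟩ h i j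
    rintro t ht _ ⟨k, rfl⟩
    exact rotatesInPerfectCodes_iterate k S hS hind t ht
  refine (image_subset_iff.2 hcode).antisymm fun q hq => ⟨q - s, ?_, sub_add_cancel q s⟩
  by_contra hn
  obtain ⟨d, hd, hqd⟩ := exists_add_mem_perfectCode hn
  exact hind q hq (q + d) (by simpa [sub_add_eq_add_sub] using hcode _ hqd) (adj_iff.2 (by simpa))

theorem IsPDS.exists_iso_image_perfectCode (hS : IsPDS triLattice S) (hne : S ≠ univ) :
    ∃ φ : triLattice ≃g triLattice, φ '' perfectCode = S := by
  have hind := hS.isIndep_of_ne_univ hne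
  obtain ⟨s, hs⟩ := hS.nonempty
  rcases hS.add_two_one_mem_or_add_three_neg_one_mem hind hs with h | h
  · exact ⟨translateIso s, hS.image_translateIso_perfectCode hind hs h⟩
  · have hmir := (hS.preimage mirrorIso).image_translateIso_perfectCode
      (hind.preimage mirrorIso.toEmbedding.toHom) (s := mirror s)
      (by simpa [mirrorIso, mirror_mirror] using hs)
      (show mirror (mirror s + (2, 1)) ∈ S by rwa [map_add, mirror_mirror])
    refine ⟨(translateIso (mirror s)).trans mirrorIso, ?_⟩
    rw [← image_preimage_eq S mirrorIso.surjective, ← hmir, image_image]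
    rfl

end PerfectCodes

/-- Up to symmetry, there is exactly one proper perfect dominating set in the
triangular lattice: one exists, and any two are related by a graph automorphism. -/
theorem unique_proper_PDS_up_to_symmetry :
    (∃ S : Set (ℤ × ℤ), IsPDS triLattice S ∧ S ≠ Set.univ) ∧
    (∀ S S' : Set (ℤ × ℤ),
      IsPDS triLattice S ∧ S ≠ Set.univ →
      IsPDS triLattice S' ∧ S' ≠ Set.univ →
      ∃ φ : triLattice ≃g triLattice, ⇑φ '' S = S') := by
  refine ⟨⟨perfectCode, isPDS_perfectCode, perfectCode_ne_univ⟩, ?_⟩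
  rintro S S' ⟨hS, hne⟩ ⟨hS', hne'⟩
  obtain ⟨φ, rfl⟩ := hS.exists_iso_image_perfectCode hne
  obtain ⟨ψ, rfl⟩ := hS'.exists_iso_image_perfectCode hne'
  exact ⟨φ.symm.trans ψ, by simp [image_image]⟩
end

section
/- For each residue j modulo 7 let S_j = {(x,y) ∈ ℤ × ℤ : 2x + 3y ≡ j (mod 7)}. Then the seven sets S_0, …, S_6 are pairwise disjoint, their union is all of ℤ × ℤ, each S_j is a 1-perfect code of the triangular lattice Δ, and each S_j is a parallel translate of S_0. In particular, the vertex set of Δ admits a partition into seven 1-perfect codes that are translates of one another. -/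
open SimpleGraph Set

/-- The residue class of `2x + 3y` modulo 7. -/
def codeClass (j : ZMod 7) : Set (ℤ × ℤ) :=
  {p | ((2 * p.1 + 3 * p.2 : ℤ) : ZMod 7) = j}


/-! Let `φ(x, y) = 2x + 3y mod 7`. The six neighbours of a vertex `v` differ from it by the six
directions, on which `φ` takes the six nonzero residues once each; so every vertex outside a fiber
of `φ` has exactly one neighbour in it, and no two vertices of a fiber are adjacent. The fibers of
an additive map are cosets of its kernel, hence translates of `S_0`. -/

section CayleyGraph

variable {V A : Type*} [AddCommGroup V] [AddCommGroup A] {G : SimpleGraph V} {D : Set V}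
  {φ : V →+ A}

theorem isPDS_preimage_singleton (hG : ∀ v u, G.Adj v u ↔ u - v ∈ D) (hφ : BijOn φ D {0}ᶜ)
    (a : A) : IsPDS G (φ ⁻¹' {a}) := by
  intro v hv
  obtain ⟨d, hd, hφd⟩ := hφ.surjOn (sub_ne_zero.2 (Ne.symm hv) : a - φ v ≠ 0)
  refine ⟨v + d, ⟨?_, ?_⟩, ?_⟩
  · simp [hφd]
  · simpa [hG] using hd
  · rintro u ⟨hu, huv⟩
    rw [hG] at huv
    have : φ (u - v) = φ d := by rw [map_sub, hφd, mem_singleton_iff.1 hu]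
    rw [← hφ.injOn huv hd this, add_sub_cancel]

theorem isIndep_preimage_singleton (hG : ∀ v u, G.Adj v u ↔ u - v ∈ D) (hφ : MapsTo φ D {0}ᶜ)
    (a : A) : IsIndep G (φ ⁻¹' {a}) := by
  intro u hu w hw huw
  apply hφ ((hG u w).1 huw)
  simp_all

end CayleyGraph

theorem AddMonoidHom.preimage_singleton_apply_eq_image_add {V A : Type*} [AddGroup V] [AddGroup A]
    (φ : V →+ A) (t : V) : φ ⁻¹' {φ t} = (· + t) '' φ ⁻¹' {0} := by
  ext p
  constructor
  · intro hp
    exact ⟨p - t, by simp_all, sub_add_cancel p t⟩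
  · rintro ⟨q, hq, rfl⟩
    simp_all

def triWeight : ℤ × ℤ →+ ZMod 7 where
  toFun p := ((2 * p.1 + 3 * p.2 : ℤ) : ZMod 7)
  map_zero' := by simp
  map_add' p q := by simp only [Prod.fst_add, Prod.snd_add]; push_cast; ring

theorem codeClass_eq_preimage (j : ZMod 7) : codeClass j = triWeight ⁻¹' {j} := rfl

theorem triWeight_surjective : Function.Surjective triWeight := by
  intro j
  obtain ⟨k, rfl⟩ := ZMod.intCast_surjective j
  refine ⟨(-k, k), ?_⟩
  change ((2 * -k + 3 * k : ℤ) : ZMod 7) = k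
  congr 1
  ring

theorem triLattice_adj_iff (v u : ℤ × ℤ) : triLattice.Adj v u ↔ u - v ∈ triDirs := by
  simp only [triLattice, fromRel_adj, triDirs, mem_insert_iff, mem_singleton_iff, Prod.ext_iff,
    Prod.fst_sub, Prod.snd_sub, ne_eq]
  omega

theorem triWeight_bijOn_triDirs : BijOn triWeight triDirs {0}ᶜ := by
  have hD : triDirs = ↑({(1,0), (-1,0), (0,1), (0,-1), (1,-1), (-1,1)} : Finset (ℤ × ℤ)) := by
    simp [triDirs]
  refine ⟨?_, ?_, ?_⟩
  · simp only [MapsTo, hD, Finset.mem_coe, mem_compl_iff, mem_singleton_iff]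
    decide
  · simp only [InjOn, hD, Finset.mem_coe]
    decide
  · simp only [SurjOn, hD, ← Finset.coe_image, subset_def, mem_compl_iff, mem_singleton_iff,
      Finset.mem_coe]
    decide

/-- The seven sets `S_j = {(x,y) : 2x + 3y ≡ j (mod 7)}` are pairwise disjoint,
cover `ℤ × ℤ`, each is a 1-perfect code of the triangular lattice, and each is a
parallel translate of `S_0`. -/
theorem partition_into_seven_perfect_codes :
    (Pairwise fun i j : ZMod 7 => Disjoint (codeClass i) (codeClass j)) ∧
    (⋃ j : ZMod 7, codeClass j) = Set.univ ∧
    (∀ j : ZMod 7, IsPDS triLattice (codeClass j) ∧ IsIndep triLattice (codeClass j)) ∧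
    (∀ j : ZMod 7, ∃ t : ℤ × ℤ, codeClass j = (fun p => p + t) '' codeClass 0) := by
  simp only [codeClass_eq_preimage]
  refine ⟨pairwise_disjoint_fiber triWeight, iUnion_eq_univ_iff.2 fun p => ⟨_, rfl⟩,
    fun j => ⟨?_, ?_⟩, fun j => ?_⟩
  · exact isPDS_preimage_singleton triLattice_adj_iff triWeight_bijOn_triDirs j
  · exact isIndep_preimage_singleton triLattice_adj_iff triWeight_bijOn_triDirs.mapsTo j
  · obtain ⟨t, rfl⟩ := triWeight_surjective j
    exact ⟨t, triWeight.preimage_singleton_apply_eq_image_add t⟩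
end

section
/- The triangular lattice Δ has exactly 14 proper perfect dominating sets: the collection {S ⊆ ℤ × ℤ : S is a proper PDS of Δ} has precisely 14 members. -/
open SimpleGraph Set

/-!
A perfect dominating set that contains an edge also contains both common neighbours of its ends,
so the edges spread around every vertex and then over the whole lattice. A proper PDS `S` is
therefore independent: a perfect code, any two of whose points are at hexagonal distance at least
three. For `c ∈ S`, the dominator of `c + (1, 1)` must be `c + (2, 1)` or `c + (1, 2)`, and either
choice forces, one point at a time, a whole hexagon of points of `S` at distance `√7` around `c`,
of one of two chiralities. Adjacent hexagon centres cannot have opposite chiralities, so `S`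
contains, and hence equals, a coset of the index-7 lattice `x + 5y ≡ 0` or `x + 3y ≡ 0 (mod 7)`.
These 7 + 7 cosets are pairwise distinct perfect codes.
-/

namespace IsPDS

variable {V : Type*} {G : SimpleGraph V} {S T : Set V}

theorem mem_of_adj_of_adj (hS : IsPDS G S) {a b w : V} (ha : a ∈ S) (hb : b ∈ S) (hab : a ≠ b)
    (hwa : G.Adj w a) (hwb : G.Adj w b) : w ∈ S := by
  by_contra hw
  obtain ⟨u, -, hu⟩ := hS w hw
  exact hab ((hu a ⟨ha, hwa⟩).trans (hu b ⟨hb, hwb⟩).symm)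

theorem eq_of_closedNbhd (hS : IsPDS G S) (hind : IsIndep G S) {a b w : V} (ha : a ∈ S)
    (hb : b ∈ S) (hwa : w = a ∨ G.Adj w a) (hwb : w = b ∨ G.Adj w b) : a = b := by
  rcases hwa with rfl | hwa <;> rcases hwb with rfl | hwb
  · rfl
  · exact (hind w ha b hb hwb).elim
  · exact (hind w hb a ha hwa).elim
  · by_cases hw : w ∈ S
    · exact (hind w hw a ha hwa).elim
    · obtain ⟨u, -, hu⟩ := hS w hw
      exact (hu a ⟨ha, hwa⟩).trans (hu b ⟨hb, hwb⟩).symm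

theorem eq_of_subset (hT : IsPDS G T) (hind : IsIndep G S) (hTS : T ⊆ S) : S = T := by
  refine Subset.antisymm (fun s hs => ?_) hTS
  by_contra hsT
  obtain ⟨u, ⟨hu, hsu⟩, -⟩ := hT s hsT
  exact hind s hs u (hTS hu) hsu

end IsPDS

theorem add_zsmul_induction {α : Type*} [AddGroup α] {P : α → Prop} {g : α}
    (hadd : ∀ x, P x → P (x + g)) (hsub : ∀ x, P x → P (x - g)) {x : α} (hx : P x) (n : ℤ) :
    P (x + n • g) := by
  induction n using Int.induction_on with
  | zero => simpa using hx
  | succ n ih => simpa [add_zsmul, add_assoc] using hadd _ ih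
  | pred n ih =>
    convert hsub _ ih using 1
    rw [sub_zsmul, one_zsmul, add_sub_assoc, sub_eq_add_neg]

def triDirList : List (ℤ × ℤ) := [(1,0), (-1,0), (0,1), (0,-1), (1,-1), (-1,1)]

theorem mem_triDirs_iff {d : ℤ × ℤ} : d ∈ triDirs ↔ d ∈ triDirList := by
  simp [triDirs, triDirList]

theorem triLattice_adj {u v : ℤ × ℤ} : triLattice.Adj u v ↔ u - v ∈ triDirList := by
  have hneg : ∀ d ∈ triDirList, -d ∈ triDirList := by decide
  have hzero : (0 : ℤ × ℤ) ∉ triDirList := by decide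
  rw [triLattice, fromRel_adj, mem_triDirs_iff, mem_triDirs_iff]
  constructor
  · rintro ⟨-, h | h⟩
    · exact h
    · simpa using hneg _ h
  · intro h
    exact ⟨fun huv => hzero (by simpa [huv] using h), Or.inl h⟩

theorem triLattice_adj_add_left {c a b : ℤ × ℤ} :
    triLattice.Adj (c + a) (c + b) ↔ a - b ∈ triDirList := by
  rw [triLattice_adj, add_sub_add_left_eq_sub]

/-- Rotation by `π / 3` in the lattice coordinates; it permutes `triDirList` cyclically. -/
def triRot (v : ℤ × ℤ) : ℤ × ℤ := (-v.2, v.1 + v.2)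

def closedNbhdOffsets : List (ℤ × ℤ) := 0 :: triDirList

/-- `δ` is at graph distance at most two from `0`. -/
def IsNear (δ : ℤ × ℤ) : Prop := ∃ p ∈ closedNbhdOffsets, ∃ q ∈ closedNbhdOffsets, δ = p - q

instance : DecidablePred IsNear := fun _ => by unfold IsNear; infer_instance

/-- If the offsets in `K` lie in a perfect code, then `m` does not (it is near some `q ∈ K`),
and its dominator `m - d`, being near no `q ∈ K`, lies in `R`. -/
def Forces (K : List (ℤ × ℤ)) (m : ℤ × ℤ) (R : List (ℤ × ℤ)) : Prop :=
  (∃ q ∈ K, IsNear (m - q) ∧ m ≠ q) ∧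
    ∀ d ∈ triDirList, m - d ∈ R ∨ ∃ q ∈ K, IsNear (m - d - q) ∧ m - d ≠ q

instance (K : List (ℤ × ℤ)) (m : ℤ × ℤ) (R : List (ℤ × ℤ)) : Decidable (Forces K m R) := by
  unfold Forces; infer_instance

/-- The six lattice points at Euclidean distance `√7` from the origin come in two mirror-image
hexagons. -/
def hexA : List (ℤ × ℤ) := [(2,1), (3,-2), (1,-3), (-2,-1), (-3,2), (-1,3)]

def hexB : List (ℤ × ℤ) := [(1,2), (-2,3), (-3,1), (-1,-2), (2,-3), (3,-1)]

def HasHex (H : List (ℤ × ℤ)) (S : Set (ℤ × ℤ)) (c : ℤ × ℤ) : Prop :=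
  c ∈ S ∧ ∀ m ∈ H, c + m ∈ S

namespace IsPDS

variable {S : Set (ℤ × ℤ)}

theorem add_triRot_mem (hS : IsPDS triLattice S) {a d : ℤ × ℤ} (ha : a ∈ S)
    (hd : d ∈ triDirList) (had : a + d ∈ S) : a + triRot d ∈ S := by
  have htri : ∀ d ∈ triDirList,
      (0 : ℤ × ℤ) - d ∈ triDirList ∧ triRot d - 0 ∈ triDirList ∧ triRot d - d ∈ triDirList := by
    decide
  obtain ⟨h0d, hr0, hrd⟩ := htri d hd
  rw [← add_zero a] at ha
  exact hS.mem_of_adj_of_adj ha had (triLattice_adj_add_left.2 h0d).ne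
    (triLattice_adj_add_left.2 hr0) (triLattice_adj_add_left.2 hrd)

theorem add_mem_of_add_mem (hS : IsPDS triLattice S) {a d e : ℤ × ℤ} (ha : a ∈ S)
    (hd : d ∈ triDirList) (had : a + d ∈ S) (he : e ∈ triDirList) : a + e ∈ S := by
  have hiter : ∀ k : ℕ, triRot^[k] d ∈ triDirList ∧ a + triRot^[k] d ∈ S := by
    have hrot : ∀ d ∈ triDirList, triRot d ∈ triDirList := by decide
    intro k
    induction k with
    | zero => exact ⟨hd, had⟩
    | succ k ih =>
      rw [Function.iterate_succ_apply']
      exact ⟨hrot _ ih.1, hS.add_triRot_mem ha ih.1 ih.2⟩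
  have htrans : ∀ d ∈ triDirList, ∀ e ∈ triDirList, ∃ k ∈ List.range 6, triRot^[k] d = e := by
    decide
  obtain ⟨k, -, rfl⟩ := htrans d hd e he
  exact (hiter k).2

theorem isIndep_of_ne_univ_s3 (hS : IsPDS triLattice S) (hne : S ≠ univ) :
    IsIndep triLattice S := by
  intro a ha b hb hab
  apply hne
  let P : ℤ × ℤ → Prop := fun x => x ∈ S ∧ ∃ d ∈ triDirList, x + d ∈ S
  have hstep : ∀ e ∈ triDirList, ∀ x, P x → P (x + e) := by
    have hneg : ∀ e ∈ triDirList, -e ∈ triDirList := by decide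
    rintro e he x ⟨hx, d, hd, hxd⟩
    exact ⟨hS.add_mem_of_add_mem hx hd hxd he, -e, hneg e he, by simpa using hx⟩
  have hP : ∀ m n : ℤ, P (b + m • (1, 0) + n • (0, 1)) := by
    have hb : P b := ⟨hb, a - b, triLattice_adj.1 hab, by simpa using ha⟩
    intro m n
    refine add_zsmul_induction (hstep _ (by decide)) ?_ ?_ n
    · simpa [sub_eq_add_neg] using hstep (-(0, 1)) (by decide)
    refine add_zsmul_induction (hstep _ (by decide)) ?_ hb m
    simpa [sub_eq_add_neg] using hstep (-(1, 0)) (by decide)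
  refine eq_univ_of_forall fun y => ?_
  convert (hP (y - b).1 (y - b).2).1
  ext <;> simp

theorem eq_of_isNear (hS : IsPDS triLattice S) (hind : IsIndep triLattice S) {a b : ℤ × ℤ}
    (ha : a ∈ S) (hb : b ∈ S) (hab : IsNear (a - b)) : a = b := by
  obtain ⟨p, hp, q, hq, hpq⟩ := hab
  have hnbhd : ∀ {c r : ℤ × ℤ}, r ∈ closedNbhdOffsets →
      c + r = c ∨ triLattice.Adj (c + r) c := by
    intro c r hr
    rcases List.mem_cons.1 hr with rfl | hr
    · exact Or.inl (add_zero c)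
    · exact Or.inr (triLattice_adj.2 (by simpa using hr))
  have hw : b + p = a + q := by rw [add_comm b]; exact (sub_eq_sub_iff_add_eq_add.1 hpq).symm
  exact hS.eq_of_closedNbhd hind ha hb (hw ▸ hnbhd hq) (hnbhd hp)

theorem exists_add_mem_of_forces (hS : IsPDS triLattice S) (hind : IsIndep triLattice S)
    {c m : ℤ × ℤ} {K R : List (ℤ × ℤ)} (hK : ∀ q ∈ K, c + q ∈ S) (hF : Forces K m R) :
    ∃ r ∈ R, c + r ∈ S := by
  obtain ⟨⟨q₀, hq₀, hmq₀, hne₀⟩, hR⟩ := hF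
  have hfar : ∀ {r}, c + r ∈ S → ∀ q ∈ K, IsNear (r - q) → r = q := fun hr q hq hrq =>
    add_left_cancel (hS.eq_of_isNear hind hr (hK q hq) (by simpa using hrq))
  have hcm : c + m ∉ S := fun h => hne₀ (hfar h q₀ hq₀ hmq₀)
  obtain ⟨u, ⟨hu, hmu⟩, -⟩ := hS _ hcm
  have hud : u = c + (m - (c + m - u)) := by abel
  rw [hud] at hu
  rcases hR _ (triLattice_adj.1 hmu) with hd | ⟨q, hq, hdq, hne⟩
  · exact ⟨_, hd, hu⟩
  · exact (hne (hfar hu q hq hdq)).elim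

theorem add_mem_of_forces (hS : IsPDS triLattice S) (hind : IsIndep triLattice S)
    {c k m r : ℤ × ℤ} (hc : c ∈ S) (hk : c + k ∈ S) (hF : Forces [0, k] m [r]) :
    c + r ∈ S := by
  obtain ⟨r', hr', hcr'⟩ := hS.exists_add_mem_of_forces hind (c := c) (by simp [hc, hk]) hF
  rwa [List.mem_singleton.1 hr'] at hcr'

theorem hasHex_A (hS : IsPDS triLattice S) (hind : IsIndep triLattice S) {c : ℤ × ℤ}
    (hc : c ∈ S) (h₁ : c + (2,1) ∈ S) : HasHex hexA S c := by
  have h₂ := hS.add_mem_of_forces hind hc h₁ (m := (2,-1)) (r := (3,-2)) (by decide)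
  have h₃ := hS.add_mem_of_forces hind hc h₂ (m := (1,-2)) (r := (1,-3)) (by decide)
  have h₄ := hS.add_mem_of_forces hind hc h₃ (m := (-1,-1)) (r := (-2,-1)) (by decide)
  have h₅ := hS.add_mem_of_forces hind hc h₄ (m := (-2,1)) (r := (-3,2)) (by decide)
  have h₆ := hS.add_mem_of_forces hind hc h₅ (m := (-1,2)) (r := (-1,3)) (by decide)
  exact ⟨hc, by simp [hexA, h₁, h₂, h₃, h₄, h₅, h₆]⟩

theorem hasHex_B (hS : IsPDS triLattice S) (hind : IsIndep triLattice S) {c : ℤ × ℤ}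
    (hc : c ∈ S) (h₁ : c + (1,2) ∈ S) : HasHex hexB S c := by
  have h₂ := hS.add_mem_of_forces hind hc h₁ (m := (-1,2)) (r := (-2,3)) (by decide)
  have h₃ := hS.add_mem_of_forces hind hc h₂ (m := (-2,1)) (r := (-3,1)) (by decide)
  have h₄ := hS.add_mem_of_forces hind hc h₃ (m := (-1,-1)) (r := (-1,-2)) (by decide)
  have h₅ := hS.add_mem_of_forces hind hc h₄ (m := (1,-2)) (r := (2,-3)) (by decide)
  have h₆ := hS.add_mem_of_forces hind hc h₅ (m := (2,-1)) (r := (3,-1)) (by decide)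
  exact ⟨hc, by simp [hexB, h₁, h₂, h₃, h₄, h₅, h₆]⟩

theorem hasHex_A_or_B (hS : IsPDS triLattice S) (hind : IsIndep triLattice S) {c : ℤ × ℤ}
    (hc : c ∈ S) : HasHex hexA S c ∨ HasHex hexB S c := by
  obtain ⟨r, hr, hcr⟩ := hS.exists_add_mem_of_forces hind (K := [0]) (m := (1,1))
    (R := [(2,1), (1,2)]) (by simpa using hc) (by decide)
  rcases List.mem_pair.1 hr with rfl | rfl
  · exact Or.inl (hS.hasHex_A hind hc hcr)
  · exact Or.inr (hS.hasHex_B hind hc hcr)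

end IsPDS

def codeWeight (k : ZMod 7) (v : ℤ × ℤ) : ZMod 7 := v.1 + k * v.2

def latticeCode (k c : ZMod 7) : Set (ℤ × ℤ) := {v | codeWeight k v = c}

theorem codeWeight_sub (k : ZMod 7) (u v : ℤ × ℤ) :
    codeWeight k (u - v) = codeWeight k u - codeWeight k v := by
  simp only [codeWeight, Prod.fst_sub, Prod.snd_sub, Int.cast_sub]
  ring

/-- For `k = 3, 5`, `codeWeight k` maps the six directions bijectively onto the nonzero residues,
so every vertex off the code has exactly one code neighbour. -/
theorem isPDS_latticeCode {k : ZMod 7} (hk : k = 3 ∨ k = 5) (c : ZMod 7) :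
    IsPDS triLattice (latticeCode k c) := by
  have hsurj : ∀ z : ZMod 7, z ≠ 0 → ∃ d ∈ triDirList, codeWeight k d = z := by
    rcases hk with rfl | rfl <;> decide
  have hinj : ∀ d ∈ triDirList, ∀ e ∈ triDirList,
      codeWeight k d = codeWeight k e → d = e := by
    rcases hk with rfl | rfl <;> decide
  intro v hv
  obtain ⟨d, hd, hwd⟩ := hsurj (codeWeight k v - c) (sub_ne_zero.2 hv)
  refine ⟨v - d, ⟨?_, triLattice_adj.2 (by simpa using hd)⟩, ?_⟩
  · simp [latticeCode, codeWeight_sub, hwd]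
  · rintro u ⟨hu, hvu⟩
    have := hinj _ (triLattice_adj.1 hvu) d hd (by rw [codeWeight_sub, hwd, hu])
    rw [← this, sub_sub_cancel]

theorem exists_mem_latticeCode (k c : ZMod 7) : ∃ v, v ∈ latticeCode k c := by
  obtain ⟨n, rfl⟩ := ZMod.intCast_surjective c
  exact ⟨(n, 0), by simp [latticeCode, codeWeight]⟩

theorem latticeCode_injective (k : ZMod 7) : Function.Injective (latticeCode k) := by
  intro c c' h
  obtain ⟨v, hv⟩ := exists_mem_latticeCode k c
  exact hv.symm.trans (h ▸ hv : v ∈ latticeCode k c')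

theorem latticeCode_ne_univ (k c : ZMod 7) : latticeCode k c ≠ univ := by
  intro h
  obtain ⟨v, hv⟩ := exists_mem_latticeCode k (c + 1)
  have hv' : v ∈ latticeCode k c := h ▸ mem_univ v
  exact absurd (add_eq_left.1 (hv.symm.trans hv')) (by decide)

/-- `(-3, 1)` has weight `0` for `k = 3` but `2` for `k = 5`. -/
theorem latticeCode_three_ne_five (c c' : ZMod 7) : latticeCode 3 c ≠ latticeCode 5 c' := by
  intro h
  obtain ⟨v, hv⟩ := exists_mem_latticeCode 3 c
  have hv' : v + (-3, 1) ∈ latticeCode 3 c := by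
    rw [← hv]
    simp only [latticeCode, codeWeight, mem_ofPred_eq, Prod.fst_add, Prod.snd_add]
    push_cast
    ring
  rw [h] at hv hv'
  have h0 := codeWeight_sub 5 (v + (-3, 1)) v
  rw [add_sub_cancel_left, hv, hv', sub_self] at h0
  exact absurd h0 (by decide)

theorem exists_zsmul_add_zsmul_of_codeWeight_five {v : ℤ × ℤ} (hv : codeWeight 5 v = 0) :
    ∃ a b : ℤ, v = a • (2, 1) + b • (3, -2) := by
  have h7 : (7 : ℤ) ∣ v.1 + 5 * v.2 :=
    (ZMod.intCast_zmod_eq_zero_iff_dvd _ 7).1 (by push_cast; exact hv)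
  refine ⟨(2 * v.1 + 3 * v.2) / 7, (v.1 - 2 * v.2) / 7, ?_⟩
  ext <;> simp <;> omega

theorem exists_zsmul_add_zsmul_of_codeWeight_three {v : ℤ × ℤ} (hv : codeWeight 3 v = 0) :
    ∃ a b : ℤ, v = a • (1, 2) + b • (3, -1) := by
  have h7 : (7 : ℤ) ∣ v.1 + 3 * v.2 :=
    (ZMod.intCast_zmod_eq_zero_iff_dvd _ 7).1 (by push_cast; exact hv)
  refine ⟨(v.1 + 3 * v.2) / 7, (2 * v.1 - v.2) / 7, ?_⟩
  ext <;> simp <;> omega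

namespace HasHex

variable {S : Set (ℤ × ℤ)} {H H' : List (ℤ × ℤ)}

/-- A hexagon of type `H'` around `c + g` would contain a point within distance two of `c`. -/
theorem add (hS : IsPDS triLattice S) (hind : IsIndep triLattice S)
    (htype : ∀ c ∈ S, HasHex H S c ∨ HasHex H' S c)
    (hclash : ∀ g ∈ H, ∃ m ∈ H', IsNear (g + m) ∧ g + m ≠ 0)
    {c g : ℤ × ℤ} (hc : HasHex H S c) (hg : g ∈ H) : HasHex H S (c + g) := by
  refine (htype _ (hc.2 g hg)).resolve_right fun h' => ?_
  obtain ⟨m, hm, hnear, hne⟩ := hclash g hg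
  refine hne (add_left_cancel (a := c) ?_)
  rw [add_zero, ← add_assoc]
  exact hS.eq_of_isNear hind (h'.2 m hm) hc.1 (by simpa [add_assoc] using hnear)

theorem eq_latticeCode (hS : IsPDS triLattice S) (hind : IsIndep triLattice S)
    (htype : ∀ c ∈ S, HasHex H S c ∨ HasHex H' S c)
    (hclash : ∀ g ∈ H, ∃ m ∈ H', IsNear (g + m) ∧ g + m ≠ 0)
    {k : ZMod 7} (hk : k = 3 ∨ k = 5) {g₁ g₂ : ℤ × ℤ}
    (hg₁ : g₁ ∈ H ∧ -g₁ ∈ H) (hg₂ : g₂ ∈ H ∧ -g₂ ∈ H)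
    (hspan : ∀ v, codeWeight k v = 0 → ∃ a b : ℤ, v = a • g₁ + b • g₂)
    {c : ℤ × ℤ} (hc : HasHex H S c) : S = latticeCode k (codeWeight k c) := by
  have hmove : ∀ {g}, g ∈ H ∧ -g ∈ H → ∀ {x} (n : ℤ), HasHex H S x → HasHex H S (x + n • g) :=
    fun hg _ n hx => add_zsmul_induction (fun _ h => h.add hS hind htype hclash hg.1)
      (fun _ h => by simpa [sub_eq_add_neg] using h.add hS hind htype hclash hg.2) hx n
  refine (isPDS_latticeCode hk _).eq_of_subset hind fun v hv => ?_
  obtain ⟨a, b, hab⟩ := hspan (v - c) (by rw [codeWeight_sub, hv, sub_self])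
  have h := (hmove hg₂ b (hmove hg₁ a hc)).1
  rwa [add_assoc, ← hab, add_sub_cancel] at h

end HasHex

theorem isPDS_and_ne_univ_iff {S : Set (ℤ × ℤ)} :
    IsPDS triLattice S ∧ S ≠ univ ↔ S ∈ range (Sum.elim (latticeCode 3) (latticeCode 5)) := by
  constructor
  · rintro ⟨hS, hne⟩
    have hind := hS.isIndep_of_ne_univ_s3 hne
    obtain ⟨c, hc⟩ : S.Nonempty := by
      by_contra h
      obtain ⟨u, ⟨hu, -⟩, -⟩ := hS 0 (by simp [not_nonempty_iff_eq_empty.1 h])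
      exact h ⟨u, hu⟩
    have htype := fun c (hc : c ∈ S) => hS.hasHex_A_or_B hind hc
    rcases htype c hc with hA | hB
    · refine ⟨Sum.inr _, (hA.eq_latticeCode hS hind htype (by decide) (Or.inr rfl)
        (g₁ := (2, 1)) (g₂ := (3, -2)) (by decide) (by decide)
        fun _ => exists_zsmul_add_zsmul_of_codeWeight_five).symm⟩
    · refine ⟨Sum.inl _, (hB.eq_latticeCode hS hind (fun c hc => (htype c hc).symm) (by decide)
        (Or.inl rfl) (g₁ := (1, 2)) (g₂ := (3, -1)) (by decide) (by decide)
        fun _ => exists_zsmul_add_zsmul_of_codeWeight_three).symm⟩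
  · rintro ⟨c | c, rfl⟩
    · exact ⟨isPDS_latticeCode (Or.inl rfl) c, latticeCode_ne_univ 3 c⟩
    · exact ⟨isPDS_latticeCode (Or.inr rfl) c, latticeCode_ne_univ 5 c⟩

/-- The triangular lattice has exactly 14 proper perfect dominating sets. -/
theorem fourteen_proper_PDSs :
    {S : Set (ℤ × ℤ) | IsPDS triLattice S ∧ S ≠ Set.univ}.ncard = 14 := by
  have hset : {S : Set (ℤ × ℤ) | IsPDS triLattice S ∧ S ≠ Set.univ}
      = range (Sum.elim (latticeCode 3) (latticeCode 5)) :=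
    Set.ext fun _ => isPDS_and_ne_univ_iff
  rw [hset, ncard_range_of_injective ((latticeCode_injective 3).sumElim
    (latticeCode_injective 5) latticeCode_three_ne_five)]
  simp
end

section
/- The set S₁ = {(x,y) ∈ ℤ × ℤ : x and y are both even} is a proper semiperfect dominating set of the triangular lattice Δ; S₁ is an independent set of Δ; the subgraph of Δ induced on the complement of S₁ is 4-regular and connected; and the minimum graph distance between distinct vertices of S₁ is 2 (any two distinct vertices of S₁ are at distance at least 2, and some pair is at distance exactly 2). -/
open SimpleGraph Set

/-- The set of points with both coordinates even. -/
def spdsOne : Set (ℤ × ℤ) := {p | Even p.1 ∧ Even p.2}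

/-! Modulo 2 the six lattice directions fall into the three nonzero residue classes, each class
holding one direction and its negative. Hence a vertex `v ∉ spdsOne` has exactly two neighbours in
`spdsOne`, namely `v ± d` for the direction `d ≡ v (mod 2)`, and its other four neighbours lie
outside. Every odd row and every odd column avoids `spdsOne`, and any two of them meet, which makes
the complement connected. -/

namespace SimpleGraph

variable {V : Type*} {G : SimpleGraph V}

theorem reachable_of_adj_add_one (f : ℤ → V) (hf : ∀ n, G.Adj (f n) (f (n + 1))) (m n : ℤ) :
    G.Reachable (f m) (f n) :=
  let φ : hasse ℤ →g G :=
    ⟨f, by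
      rintro a b (hab | hba)
      · exact Order.covBy_iff_add_one_eq.mp hab ▸ hf a
      · exact (Order.covBy_iff_add_one_eq.mp hba ▸ hf b).symm⟩
  (hasse_preconnected_of_succ ℤ m n).map φ

theorem Reachable.two_le_dist {u v : V} (hr : G.Reachable u v) (hne : u ≠ v)
    (hnadj : ¬G.Adj u v) : 2 ≤ G.dist u v := by
  have h0 : G.dist u v ≠ 0 := dist_ne_zero_iff_ne_and_reachable.mpr ⟨hne, hr⟩
  have h1 : G.dist u v ≠ 1 := fun h => hnadj (dist_eq_one_iff_adj.mp h)
  omega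

theorem IsSPDS.ncard_neighborSet_induce_compl_add_two {S : Set V} (hS : IsSPDS G S) (v : ↥Sᶜ)
    (hfin : (G.neighborSet v).Finite) :
    ((G.induce Sᶜ).neighborSet v).ncard + 2 = (G.neighborSet v).ncard := by
  have hout : ((G.induce Sᶜ).neighborSet v).ncard = (G.neighborSet v \ S).ncard := by
    rw [neighborSet_induce, ← Set.ncard_image_of_injective _ Subtype.val_injective,
      Subtype.image_preimage_coe, Set.inter_comm, Set.sdiff_eq]
  have hin : (G.neighborSet v ∩ S).ncard = 2 := by
    rw [← hS v v.2]
    congr 1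
    ext u
    exact and_comm
  rw [hout, ← hin, add_comm, Set.ncard_inter_add_ncard_sdiff_eq_ncard _ _ hfin]

end SimpleGraph

theorem triLattice_adj_iff_s6 {u v : ℤ × ℤ} : triLattice.Adj u v ↔
    (u.1 - v.1 = 1 ∧ u.2 - v.2 = 0) ∨ (u.1 - v.1 = -1 ∧ u.2 - v.2 = 0) ∨
    (u.1 - v.1 = 0 ∧ u.2 - v.2 = 1) ∨ (u.1 - v.1 = 0 ∧ u.2 - v.2 = -1) ∨
    (u.1 - v.1 = 1 ∧ u.2 - v.2 = -1) ∨ (u.1 - v.1 = -1 ∧ u.2 - v.2 = 1) := by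
  simp only [triLattice, fromRel_adj, triDirs, Set.mem_insert_iff, Set.mem_singleton_iff,
    Prod.ext_iff, Prod.fst_sub, Prod.snd_sub, ne_eq]
  omega

theorem triLattice_neighborSet (v : ℤ × ℤ) :
    triLattice.neighborSet v = (v + ·) '' triDirs := by
  ext ⟨a, b⟩
  simp only [mem_neighborSet, triLattice_adj_iff_s6, triDirs, Set.image_insert_eq,
    Set.image_singleton, Set.mem_insert_iff, Set.mem_singleton_iff, Prod.ext_iff,
    Prod.fst_add, Prod.snd_add]
  omega

theorem ncard_triDirs : triDirs.ncard = 6 := by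
  rw [triDirs, Set.ncard_eq_toFinset_card']
  rfl

theorem triLattice_ncard_neighborSet (v : ℤ × ℤ) : (triLattice.neighborSet v).ncard = 6 := by
  rw [triLattice_neighborSet, Set.ncard_image_of_injective _ (add_right_injective v), ncard_triDirs]

theorem triLattice_reachable (u v : ℤ × ℤ) : triLattice.Reachable u v := by
  have hrow : triLattice.Reachable (u.1, u.2) (v.1, u.2) :=
    reachable_of_adj_add_one (fun x => (x, u.2)) (fun _ => triLattice_adj_iff_s6.mpr (by omega)) _ _
  have hcol : triLattice.Reachable (v.1, u.2) (v.1, v.2) :=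
    reachable_of_adj_add_one (fun y => (v.1, y)) (fun _ => triLattice_adj_iff_s6.mpr (by omega)) _ _
  exact hrow.trans hcol

theorem notMem_spdsOne_iff {v : ℤ × ℤ} : v ∉ spdsOne ↔ v.1 % 2 = 1 ∨ v.2 % 2 = 1 := by
  simp only [spdsOne, Set.mem_ofPred_eq, Int.even_iff]
  omega

theorem isIndep_spdsOne : IsIndep triLattice spdsOne := by
  intro a ha b hb hab
  simp only [spdsOne, Set.mem_ofPred_eq, Int.even_iff] at ha hb
  rw [triLattice_adj_iff_s6] at hab
  omega

/-- `(v.1 % 2, -(v.2 % 2))` is the lattice direction congruent to `v` mod 2. -/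
theorem setOf_mem_spdsOne_adj {v : ℤ × ℤ} (hv : v ∉ spdsOne) :
    {u | u ∈ spdsOne ∧ triLattice.Adj v u} =
      {v + (v.1 % 2, -(v.2 % 2)), v - (v.1 % 2, -(v.2 % 2))} := by
  rw [notMem_spdsOne_iff] at hv
  ext ⟨a, b⟩
  simp only [spdsOne, triLattice_adj_iff_s6, Int.even_iff, Set.mem_ofPred_eq, Set.mem_insert_iff,
    Set.mem_singleton_iff, Prod.ext_iff, Prod.fst_add, Prod.snd_add, Prod.fst_sub, Prod.snd_sub]
  omega

theorem isSPDS_spdsOne : IsSPDS triLattice spdsOne := by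
  intro v hv
  rw [setOf_mem_spdsOne_adj hv, Set.ncard_pair]
  rw [notMem_spdsOne_iff] at hv
  simp only [ne_eq, Prod.ext_iff, Prod.fst_add, Prod.snd_add, Prod.fst_sub, Prod.snd_sub]
  omega

theorem spdsOne_ne_univ : spdsOne ≠ Set.univ :=
  Set.ne_univ_iff_exists_notMem _ |>.mpr ⟨(1, 0), notMem_spdsOne_iff.mpr (by decide)⟩

theorem ncard_neighborSet_induce_compl_spdsOne (v : ↥spdsOneᶜ) :
    ((triLattice.induce spdsOneᶜ).neighborSet v).ncard = 4 := by
  have h := isSPDS_spdsOne.ncard_neighborSet_induce_compl_add_two v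
    (Set.finite_of_ncard_ne_zero (by rw [triLattice_ncard_neighborSet]; decide))
  rw [triLattice_ncard_neighborSet] at h
  omega

theorem connected_induce_compl_spdsOne : (triLattice.induce spdsOneᶜ).Connected := by
  have hcol (x : ℤ) (hx : x % 2 = 1) (y y' : ℤ) :
      (triLattice.induce spdsOneᶜ).Reachable ⟨(x, y), notMem_spdsOne_iff.mpr (.inl hx)⟩
        ⟨(x, y'), notMem_spdsOne_iff.mpr (.inl hx)⟩ :=
    reachable_of_adj_add_one (G := triLattice.induce spdsOneᶜ)
      (fun t => ⟨(x, t), notMem_spdsOne_iff.mpr (.inl hx)⟩)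
      (fun t => (triLattice_adj_iff_s6 (u := (x, t)) (v := (x, t + 1))).mpr (by omega)) y y'
  have hrow (y : ℤ) (hy : y % 2 = 1) (x x' : ℤ) :
      (triLattice.induce spdsOneᶜ).Reachable ⟨(x, y), notMem_spdsOne_iff.mpr (.inr hy)⟩
        ⟨(x', y), notMem_spdsOne_iff.mpr (.inr hy)⟩ :=
    reachable_of_adj_add_one (G := triLattice.induce spdsOneᶜ)
      (fun t => ⟨(t, y), notMem_spdsOne_iff.mpr (.inr hy)⟩)
      (fun t => (triLattice_adj_iff_s6 (u := (t, y)) (v := (t + 1, y))).mpr (by omega)) x x'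
  let o : ↥spdsOneᶜ := ⟨(1, 1), notMem_spdsOne_iff.mpr (.inl rfl)⟩
  have hbase (v : ↥spdsOneᶜ) : (triLattice.induce spdsOneᶜ).Reachable o v := by
    obtain ⟨⟨x, y⟩, hv⟩ := v
    rcases notMem_spdsOne_iff.mp hv with hx | hy
    · exact (hrow 1 rfl 1 x).trans (hcol x hx 1 y)
    · exact (hcol 1 rfl 1 y).trans (hrow y hy 1 x)
  exact (connected_iff_exists_forall_reachable _).mpr ⟨o, hbase⟩

theorem triLattice_dist_origin_two_zero : triLattice.dist (0, 0) (2, 0) = 2 := by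
  have h01 : triLattice.Adj (0, 0) (1, 0) := triLattice_adj_iff_s6.mpr (by decide)
  have h12 : triLattice.Adj (1, 0) (2, 0) := triLattice_adj_iff_s6.mpr (by decide)
  have hle : triLattice.dist (0, 0) (2, 0) ≤ 2 := dist_le (.cons h01 (.cons h12 .nil))
  have hge := (triLattice_reachable (0, 0) (2, 0)).two_le_dist (by decide)
    (isIndep_spdsOne (0, 0) ⟨Even.zero, Even.zero⟩ (2, 0) ⟨even_two, Even.zero⟩)
  omega

/-- `spdsOne` is a proper SPDS of the triangular lattice which is independent; the
subgraph induced on its complement is 4-regular and connected; and the minimum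
distance between its distinct vertices is 2. -/
theorem isolated_SPDS_properties :
    (IsSPDS triLattice spdsOne ∧ spdsOne ≠ Set.univ) ∧
    IsIndep triLattice spdsOne ∧
    (∀ v : ↥(spdsOneᶜ), ((triLattice.induce spdsOneᶜ).neighborSet v).ncard = 4) ∧
    (triLattice.induce spdsOneᶜ).Connected ∧
    (∀ a ∈ spdsOne, ∀ b ∈ spdsOne, a ≠ b → 2 ≤ triLattice.dist a b) ∧
    (∃ a ∈ spdsOne, ∃ b ∈ spdsOne, a ≠ b ∧ triLattice.dist a b = 2) :=
  ⟨⟨isSPDS_spdsOne, spdsOne_ne_univ⟩, isIndep_spdsOne, ncard_neighborSet_induce_compl_spdsOne,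
    connected_induce_compl_spdsOne,
    fun a ha b hb hab => (triLattice_reachable a b).two_le_dist hab (isIndep_spdsOne a ha b hb),
    ⟨(0, 0), ⟨Even.zero, Even.zero⟩, (2, 0), ⟨even_two, Even.zero⟩, by decide,
      triLattice_dist_origin_two_zero⟩⟩
end

section
/- For all integers m, n ≥ 2, the toroidal triangular lattice Δ_{2m,2n} contains a proper semiperfect dominating set that is an independent set. -/
open SimpleGraph Set

/-
The even sublattice `S = {(x, y) | x, y even}` works. Reducing mod 2, the six directions of the
lattice fall into the three nonzero classes of `(ℤ/2)²` in opposite pairs `±e`. Hence no two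
vertices of `S` are adjacent, and a vertex `v ∉ S` of parity class `p ≠ 0` has exactly the two
neighbours `v ± e` in `S`, where `e` is the direction of class `p`; these are distinct because
`2 ≠ 0` in `ℤ/2m` and `ℤ/2n` once `m, n ≠ 1`.
-/

def toTorus (N M : ℕ) : ℤ × ℤ →+ ZMod N × ZMod M :=
  (Int.castAddHom (ZMod N)).prodMap (Int.castAddHom (ZMod M))

@[simp]
lemma toTorus_apply (N M : ℕ) (d : ℤ × ℤ) :
    toTorus N M d = ((d.1 : ZMod N), (d.2 : ZMod M)) :=
  rfl

lemma neg_mem_triDirs {d : ℤ × ℤ} (hd : d ∈ triDirs) : -d ∈ triDirs := by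
  simp only [triDirs, mem_insert_iff, mem_singleton_iff] at hd ⊢
  rcases hd with rfl | rfl | rfl | rfl | rfl | rfl <;> simp

lemma toTorus_ne_zero {N M : ℕ} [Nontrivial (ZMod N)] [Nontrivial (ZMod M)] {d : ℤ × ℤ}
    (hd : d ∈ triDirs) : toTorus N M d ≠ 0 := by
  simp only [triDirs, mem_insert_iff, mem_singleton_iff] at hd
  rcases hd with rfl | rfl | rfl | rfl | rfl | rfl <;> simp [Prod.ext_iff]

lemma toTorus_ne_toTorus_neg {N M : ℕ} (hN : (2 : ZMod N) ≠ 0) (hM : (2 : ZMod M) ≠ 0)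
    {d : ℤ × ℤ} (hd : d ∈ triDirs) : toTorus N M d ≠ toTorus N M (-d) := by
  simp only [triDirs, mem_insert_iff, mem_singleton_iff] at hd
  have hN' : (1 : ZMod N) ≠ -1 := fun h ↦ hN (by linear_combination h)
  have hM' : (1 : ZMod M) ≠ -1 := fun h ↦ hM (by linear_combination h)
  rcases hd with rfl | rfl | rfl | rfl | rfl | rfl <;>
    simp [Prod.ext_iff, hN', hM', hN'.symm, hM'.symm]

lemma torLattice_adj_iff {N M : ℕ} [Nontrivial (ZMod N)] [Nontrivial (ZMod M)]
    (v u : ZMod N × ZMod M) :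
    (torLattice N M).Adj v u ↔ ∃ d ∈ triDirs, u = v + toTorus N M d := by
  rw [torLattice, fromRel_adj]
  constructor
  · rintro ⟨-, ⟨d, hd, h⟩ | ⟨d, hd, h⟩⟩
    · exact ⟨-d, neg_mem_triDirs hd, by rw [map_neg, toTorus_apply, ← h]; abel⟩
    · exact ⟨d, hd, by rw [toTorus_apply, ← h]; abel⟩
  · rintro ⟨d, hd, rfl⟩
    refine ⟨fun h ↦ toTorus_ne_zero hd (by simpa using h.symm), Or.inr ⟨d, hd, by simp⟩⟩

lemma exists_mem_triDirs_toTorus_two_eq {p : ZMod 2 × ZMod 2} (hp : p ≠ 0) :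
    ∃ e ∈ triDirs, toTorus 2 2 e = p := by
  obtain ⟨a, b⟩ := p
  fin_cases a <;> fin_cases b
  · exact absurd rfl hp
  · exact ⟨(0, 1), by simp [triDirs], rfl⟩
  · exact ⟨(1, 0), by simp [triDirs], rfl⟩
  · exact ⟨(1, -1), by simp [triDirs], rfl⟩

lemma toTorus_two_eq_iff {d e : ℤ × ℤ} (hd : d ∈ triDirs) (he : e ∈ triDirs) :
    toTorus 2 2 d = toTorus 2 2 e ↔ d = e ∨ d = -e := by
  simp only [triDirs, mem_insert_iff, mem_singleton_iff] at hd he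
  rcases hd with rfl | rfl | rfl | rfl | rfl | rfl <;>
    rcases he with rfl | rfl | rfl | rfl | rfl | rfl <;> decide

instance ZMod.nontrivial_two_mul (m : ℕ) : Nontrivial (ZMod (2 * m)) :=
  ZMod.nontrivial_iff.mpr (by omega)

lemma ZMod.two_ne_zero_of_two_mul {m : ℕ} (hm : m ≠ 1) : (2 : ZMod (2 * m)) ≠ 0 := by
  intro h
  have h2 : 2 * m ∣ 2 := by exact_mod_cast (ZMod.natCast_eq_zero_iff 2 (2 * m)).mp h
  exact hm (Nat.dvd_one.mp (Nat.dvd_of_mul_dvd_mul_left two_pos h2))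

def torusParity (m n : ℕ) : ZMod (2 * m) × ZMod (2 * n) →+ ZMod 2 × ZMod 2 :=
  (ZMod.castHom (dvd_mul_right 2 m) (ZMod 2)).toAddMonoidHom.prodMap
    (ZMod.castHom (dvd_mul_right 2 n) (ZMod 2)).toAddMonoidHom

@[simp]
lemma torusParity_toTorus (m n : ℕ) (d : ℤ × ℤ) :
    torusParity m n (toTorus (2 * m) (2 * n) d) = toTorus 2 2 d := by
  simp [torusParity]

def evenVertices (m n : ℕ) : Set (ZMod (2 * m) × ZMod (2 * n)) :=
  {v | torusParity m n v = 0}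

section evenVertices

variable {m n : ℕ}

lemma isIndep_evenVertices : IsIndep (torLattice (2 * m) (2 * n)) (evenVertices m n) := by
  rintro a ha b hb hab
  obtain ⟨d, hd, rfl⟩ := (torLattice_adj_iff a b).mp hab
  rw [evenVertices, mem_ofPred_eq, map_add, ha, zero_add, torusParity_toTorus] at hb
  exact toTorus_ne_zero hd hb

lemma evenVertices_ne_univ : evenVertices m n ≠ univ := by
  intro h
  have h10 : toTorus (2 * m) (2 * n) (1, 0) ∈ evenVertices m n := h ▸ mem_univ _
  rw [evenVertices, mem_ofPred_eq, torusParity_toTorus] at h10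
  exact toTorus_ne_zero (by simp [triDirs]) h10

lemma neighbors_inter_evenVertices {v : ZMod (2 * m) × ZMod (2 * n)} {e : ℤ × ℤ}
    (he : e ∈ triDirs) (hv : torusParity m n v = toTorus 2 2 e) :
    {u | u ∈ evenVertices m n ∧ (torLattice (2 * m) (2 * n)).Adj v u} =
      {v + toTorus (2 * m) (2 * n) e, v + toTorus (2 * m) (2 * n) (-e)} := by
  have char_two : ∀ x y : ZMod 2 × ZMod 2, x + y = 0 ↔ y = x := by decide
  have mem_iff : ∀ d ∈ triDirs,
      v + toTorus (2 * m) (2 * n) d ∈ evenVertices m n ↔ d = e ∨ d = -e := fun d hd ↦ by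
    rw [evenVertices, mem_ofPred_eq, map_add, torusParity_toTorus, hv, char_two,
      toTorus_two_eq_iff hd he]
  ext u
  simp only [mem_ofPred_eq, torLattice_adj_iff, mem_insert_iff, mem_singleton_iff]
  constructor
  · rintro ⟨hu, d, hd, rfl⟩
    rcases (mem_iff d hd).mp hu with rfl | rfl
    exacts [Or.inl rfl, Or.inr rfl]
  · rintro (rfl | rfl)
    · exact ⟨(mem_iff e he).mpr (Or.inl rfl), e, he, rfl⟩
    · exact ⟨(mem_iff _ (neg_mem_triDirs he)).mpr (Or.inr rfl), -e, neg_mem_triDirs he, rfl⟩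

lemma isSPDS_evenVertices (hm : m ≠ 1) (hn : n ≠ 1) :
    IsSPDS (torLattice (2 * m) (2 * n)) (evenVertices m n) := by
  intro v hv
  obtain ⟨e, he, hev⟩ := exists_mem_triDirs_toTorus_two_eq hv
  rw [neighbors_inter_evenVertices he hev.symm]
  refine ncard_pair ((add_right_injective v).ne ?_)
  exact toTorus_ne_toTorus_neg (ZMod.two_ne_zero_of_two_mul hm)
    (ZMod.two_ne_zero_of_two_mul hn) he

end evenVertices

/-- For all `m, n ≥ 2`, the toroidal triangular lattice `Δ_{2m,2n}` contains a
proper semiperfect dominating set that is an independent set. -/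
theorem toroidal_isolated_SPDS (m n : ℕ) (hm : 2 ≤ m) (hn : 2 ≤ n) :
    ∃ S : Set (ZMod (2 * m) × ZMod (2 * n)),
      IsSPDS (torLattice (2 * m) (2 * n)) S ∧ S ≠ Set.univ ∧
      IsIndep (torLattice (2 * m) (2 * n)) S :=
  ⟨evenVertices m n, isSPDS_evenVertices (by omega) (by omega), evenVertices_ne_univ,
    isIndep_evenVertices⟩
end

section
/- The collection of all K₂-quasiperfect dominating sets of the triangular lattice Δ, i.e. the set {S ⊆ ℤ × ℤ : S is a K₂-QPDS of Δ}, has the cardinality of the continuum (cardinality 2^ℵ₀). -/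
open SimpleGraph Set

/-!
Stack horizontal dominoes in every third row: row `3j` contains the vertices whose
first coordinate is `≡ f j` or `≡ f j + 1 (mod 3)`, and all other rows are empty. Each
chosen vertex has exactly one chosen neighbour (its domino partner), a gap vertex of
row `3j` sees both ends of the two flanking dominoes, and a vertex of row `3j ± 1` sees
two consecutive vertices of row `3j`, at least one of which is chosen. The shifts
`f j ∈ {0, 1}` can be picked independently and are read off from the set, which gives
`2 ^ ℵ₀` such sets; there are at most `#(Set (ℤ × ℤ)) = 𝔠` in total.
-/

theorem Set.ncard_pair_inter {α : Type*} {p q : α} (hpq : p ≠ q) (D : Set α)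
    [DecidablePred (· ∈ D)] :
    ({p, q} ∩ D).ncard = (if p ∈ D then 1 else 0) + (if q ∈ D then 1 else 0) := by
  by_cases hp : p ∈ D <;> by_cases hq : q ∈ D <;>
    simp [Set.insert_inter_of_mem, Set.insert_inter_of_notMem, hp, hq, hpq]

lemma triLattice_adj_iff_s19 {x y a b : ℤ} : triLattice.Adj (x, y) (a, b) ↔
    b = y ∧ (a = x - 1 ∨ a = x + 1) ∨ b = y - 1 ∧ (a = x ∨ a = x + 1) ∨
      b = y + 1 ∧ (a = x - 1 ∨ a = x) := by
  simp only [triLattice, fromRel_adj, triDirs, Prod.mk_sub_mk, mem_insert_iff,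
    mem_singleton_iff, Prod.mk.injEq, ne_eq]
  omega

def dominoRow (s : ℤ) : Set ℤ := {x | (x - s) % 3 ≠ 2}

def dominoSet (f : ℤ → ℤ) : Set (ℤ × ℤ) := {v | v.2 % 3 = 0 ∧ v.1 ∈ dominoRow (f (v.2 / 3))}

section dominoRow
variable {s x : ℤ}

lemma ncard_flanks_inter_dominoRow_of_mem (hx : x ∈ dominoRow s) :
    ({x - 1, x + 1} ∩ dominoRow s).ncard = 1 := by
  classical
  rw [Set.ncard_pair_inter (by omega)]
  split_ifs with h₁ h₂ h₂ <;> simp only [dominoRow, mem_ofPred_eq] at hx h₁ h₂ <;> omega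

lemma ncard_flanks_inter_dominoRow_of_notMem (hx : x ∉ dominoRow s) :
    ({x - 1, x + 1} ∩ dominoRow s).ncard = 2 := by
  classical
  rw [Set.ncard_pair_inter (by omega)]
  split_ifs with h₁ h₂ h₂ <;> simp only [dominoRow, mem_ofPred_eq] at hx h₁ h₂ <;> omega

lemma ncard_consecutive_inter_dominoRow {y : ℤ} (hxy : y = x + 1) :
    ({x, y} ∩ dominoRow s).ncard = 1 ∨ ({x, y} ∩ dominoRow s).ncard = 2 := by
  subst hxy
  classical
  rw [Set.ncard_pair_inter (by omega)]
  split_ifs with h₁ h₂ h₂ <;> simp only [dominoRow, mem_ofPred_eq] at h₁ h₂ <;> omega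

end dominoRow

section dominoSet
variable (f : ℤ → ℤ) {x y : ℤ}

lemma dominoSet_neighbors_of_emod_eq_zero (hy : y % 3 = 0) :
    {u | u ∈ dominoSet f ∧ triLattice.Adj (x, y) u} =
      (·, y) '' ({x - 1, x + 1} ∩ dominoRow (f (y / 3))) := by
  ext ⟨a, b⟩
  simp only [dominoSet, triLattice_adj_iff_s19, mem_ofPred_eq, mem_image, mem_inter_iff,
    mem_insert_iff, mem_singleton_iff, Prod.mk.injEq]
  constructor
  · rintro ⟨⟨hb, ha⟩, hadj⟩
    obtain rfl : b = y := by omega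
    exact ⟨a, ⟨by omega, ha⟩, rfl, rfl⟩
  · rintro ⟨a, ⟨hadj, ha⟩, rfl, rfl⟩
    exact ⟨⟨hy, ha⟩, by omega⟩

lemma dominoSet_neighbors_of_emod_eq_one (hy : y % 3 = 1) :
    {u | u ∈ dominoSet f ∧ triLattice.Adj (x, y) u} =
      (·, y - 1) '' ({x, x + 1} ∩ dominoRow (f ((y - 1) / 3))) := by
  ext ⟨a, b⟩
  simp only [dominoSet, triLattice_adj_iff_s19, mem_ofPred_eq, mem_image, mem_inter_iff,
    mem_insert_iff, mem_singleton_iff, Prod.mk.injEq]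
  constructor
  · rintro ⟨⟨hb, ha⟩, hadj⟩
    obtain rfl : b = y - 1 := by omega
    exact ⟨a, ⟨by omega, ha⟩, rfl, rfl⟩
  · rintro ⟨a, ⟨hadj, ha⟩, rfl, rfl⟩
    exact ⟨⟨by omega, ha⟩, by omega⟩

lemma dominoSet_neighbors_of_emod_eq_two (hy : y % 3 = 2) :
    {u | u ∈ dominoSet f ∧ triLattice.Adj (x, y) u} =
      (·, y + 1) '' ({x - 1, x} ∩ dominoRow (f ((y + 1) / 3))) := by
  ext ⟨a, b⟩
  simp only [dominoSet, triLattice_adj_iff_s19, mem_ofPred_eq, mem_image, mem_inter_iff,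
    mem_insert_iff, mem_singleton_iff, Prod.mk.injEq]
  constructor
  · rintro ⟨⟨hb, ha⟩, hadj⟩
    obtain rfl : b = y + 1 := by omega
    exact ⟨a, ⟨by omega, ha⟩, rfl, rfl⟩
  · rintro ⟨a, ⟨hadj, ha⟩, rfl, rfl⟩
    exact ⟨⟨by omega, ha⟩, by omega⟩

theorem isK2QPDS_dominoSet : IsK2QPDS triLattice (dominoSet f) := by
  refine ⟨fun ⟨x, y⟩ hv => ?_, fun ⟨x, y⟩ ⟨hy, hx⟩ => ?_⟩
  · rcases (by omega : y % 3 = 0 ∨ y % 3 = 1 ∨ y % 3 = 2) with hy | hy | hy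
    · rw [dominoSet_neighbors_of_emod_eq_zero f hy,
        ncard_image_of_injective _ (Prod.mk_left_injective y)]
      exact Or.inr (ncard_flanks_inter_dominoRow_of_notMem fun hx => hv ⟨hy, hx⟩)
    · rw [dominoSet_neighbors_of_emod_eq_one f hy,
        ncard_image_of_injective _ (Prod.mk_left_injective _)]
      exact ncard_consecutive_inter_dominoRow rfl
    · rw [dominoSet_neighbors_of_emod_eq_two f hy,
        ncard_image_of_injective _ (Prod.mk_left_injective _)]
      exact ncard_consecutive_inter_dominoRow (by ring)
  · rw [dominoSet_neighbors_of_emod_eq_zero f hy,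
      ncard_image_of_injective _ (Prod.mk_left_injective y)]
    exact ncard_flanks_inter_dominoRow_of_mem hx

end dominoSet

lemma dominoSet_indicator_injective :
    Function.Injective fun T : Set ℤ => dominoSet (T.indicator 1) := by
  have mem_iff (T : Set ℤ) (j : ℤ) : ((2 : ℤ), 3 * j) ∈ dominoSet (T.indicator 1) ↔ j ∈ T := by
    by_cases hj : j ∈ T <;> simp [dominoSet, dominoRow, hj]
  intro T T' h
  ext j
  rw [← mem_iff T, ← mem_iff T', show dominoSet _ = _ from h]

/-- The collection of all `K₂`-QPDSs of the triangular lattice has the cardinality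
of the continuum. -/
theorem continuum_many_K2_QPDSs :
    Cardinal.mk {S : Set (ℤ × ℤ) | IsK2QPDS triLattice S} = Cardinal.continuum := by
  have at_most : Cardinal.mk (Set (ℤ × ℤ)) = Cardinal.continuum := by simp
  have at_least : Cardinal.mk (Set ℤ) = Cardinal.continuum := by simp
  refine le_antisymm (at_most ▸ Cardinal.mk_subtype_le _) (at_least ▸ ?_)
  exact Cardinal.mk_le_of_injective
    (f := fun T => ⟨dominoSet (T.indicator 1), isK2QPDS_dominoSet _⟩)
    fun T T' h => dominoSet_indicator_injective (congrArg Subtype.val h)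
end
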